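/- Let v ∈ H and λ, ε > 0 with ‖Kv − λv‖ ≤ ε. Let I ⊆ ℕ and c > 0 be such that |λ_i − λ| ≥ c for every i ∉ I (in the paper, I is the set of indices minimizing |λ_i − λ| and c := min_{i∉I} |λ_i − λ|, assumed positive), and let P denote the orthogonal projection of H onto the closed linear span of {v_i : i ∈ I}. Then ‖v‖² ≥ ⟨v, Pv⟩ ≥ ‖v‖² − ε²/c². -/

import Mathlib

open scoped RealInnerProductSpace

/-!
Expand `w` in the eigenbasis `(v i)`. The residual `u = w - P w` has coordinates `⟪v i, w⟫` for
`i ∉ I` and `0` for `i ∈ I`, while `K w - l • w` has coordinates `(lam i - l) * ⟪v i, w⟫`; so the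
spectral gap and Parseval give `c² ‖u‖² ≤ ‖K w - l • w‖² ≤ ε²`. Pythagoras,
`‖w‖² = ‖P w‖² + ‖u‖²`, together with `⟪w, P w⟫ = ‖P w‖²` then gives both bounds.
-/

open Submodule

theorem Orthonormal.mem_orthogonal_topologicalClosure_span_image {𝕜 ι E : Type*} [RCLike 𝕜]
    [NormedAddCommGroup E] [InnerProductSpace 𝕜 E] {v : ι → E} (hv : Orthonormal 𝕜 v)
    {I : Set ι} {i : ι} (hi : i ∉ I) : v i ∈ (span 𝕜 (v '' I)).topologicalClosureᗮ := by
  rw [orthogonal_closure]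
  refine (isOrtho_span.2 ?_).ge (subset_span rfl)
  rintro _ ⟨j, hj, rfl⟩ _ rfl
  exact hv.inner_eq_zero (ne_of_mem_of_not_mem hj hi)

theorem LinearMap.IsSymmetric.inner_sub_smul_of_apply_eq_smul {H : Type*} [NormedAddCommGroup H]
    [InnerProductSpace ℝ H] {T : H →ₗ[ℝ] H} (hT : T.IsSymmetric) {e : H} {μ : ℝ}
    (he : T e = μ • e) (l : ℝ) (w : H) : ⟪e, T w - l • w⟫ = (μ - l) * ⟪e, w⟫ := by
  rw [inner_sub_right, ← hT, he, real_inner_smul_left, real_inner_smul_right, sub_mul]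

theorem Submodule.real_inner_starProjection_self {H : Type*} [NormedAddCommGroup H]
    [InnerProductSpace ℝ H] (S : Submodule ℝ H) [S.HasOrthogonalProjection] (w : H) :
    ⟪w, S.starProjection w⟫ = ‖S.starProjection w‖ ^ 2 := by
  simpa [real_inner_comm] using S.re_inner_starProjection_eq_normSq w

namespace HilbertBasis

variable {ι H : Type*} [NormedAddCommGroup H] [InnerProductSpace ℝ H]

theorem hasSum_inner_sq (b : HilbertBasis ι ℝ H) (x : H) :
    HasSum (fun i => ⟪b i, x⟫ ^ 2) (‖x‖ ^ 2) := by
  simpa [← real_inner_self_eq_norm_sq, sq, real_inner_comm] using b.hasSum_inner_mul_inner x x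

theorem mul_norm_sq_le_of_forall_mul_inner_sq_le (b : HilbertBasis ι ℝ H) {a : ℝ} {x y : H}
    (h : ∀ i, a * ⟪b i, x⟫ ^ 2 ≤ ⟪b i, y⟫ ^ 2) : a * ‖x‖ ^ 2 ≤ ‖y‖ ^ 2 :=
  hasSum_le h ((b.hasSum_inner_sq x).mul_left a) (b.hasSum_inner_sq y)

theorem sq_mul_norm_sub_starProjection_sq_le [CompleteSpace H] (b : HilbertBasis ι ℝ H)
    {T : H →ₗ[ℝ] H} (hT : T.IsSymmetric) {μ : ι → ℝ} (hμ : ∀ i, T (b i) = μ i • b i)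
    {I : Set ι} {l c : ℝ} (hc : 0 ≤ c) (hgap : ∀ i ∉ I, c ≤ |μ i - l|) (w : H) :
    c ^ 2 * ‖w - (span ℝ (b '' I)).topologicalClosure.starProjection w‖ ^ 2 ≤
      ‖T w - l • w‖ ^ 2 := by
  set S := (span ℝ (b '' I)).topologicalClosure
  refine b.mul_norm_sq_le_of_forall_mul_inner_sq_le fun i => ?_
  by_cases hi : i ∈ I
  · have hbS : b i ∈ S := le_topologicalClosure _ (subset_span ⟨i, hi, rfl⟩)
    rw [inner_right_of_mem_orthogonal hbS (S.sub_starProjection_mem_orthogonal w)]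
    simpa using sq_nonneg _
  · have hbP : ⟪b i, S.starProjection w⟫ = 0 :=
      inner_left_of_mem_orthogonal (S.starProjection_apply_mem w)
        (b.orthonormal.mem_orthogonal_topologicalClosure_span_image hi)
    rw [inner_sub_right, hbP, sub_zero, hT.inner_sub_smul_of_apply_eq_smul (hμ i), mul_pow,
      ← sq_abs (μ i - l)]
    gcongr
    exact hgap i hi

end HilbertBasis

theorem stmt_11 {H : Type*} [NormedAddCommGroup H] [InnerProductSpace ℝ H] [CompleteSpace H]
    (K : H →L[ℝ] H)
    (hsa : ∀ x y : H, ⟪K x, y⟫ = ⟪x, K y⟫)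
    (v : ℕ → H) (hv : Orthonormal ℝ v)
    (htot : ⊤ ≤ (Submodule.span ℝ (Set.range v)).topologicalClosure)
    (lam : ℕ → ℝ) (heig : ∀ i, K (v i) = lam i • v i)
    (w : H) (l ε : ℝ) (hKw : ‖K w - l • w‖ ≤ ε)
    (I : Set ℕ) (c : ℝ) (hc : 0 < c) (hsep : ∀ i ∉ I, c ≤ |lam i - l|) :
    ⟪w, (Submodule.orthogonalProjectionOnto ((Submodule.span ℝ (v '' I)).topologicalClosure) w : H)⟫ ≤ ‖w‖ ^ 2 ∧
    ‖w‖ ^ 2 - ε ^ 2 / c ^ 2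
      ≤ ⟪w, (Submodule.orthogonalProjectionOnto ((Submodule.span ℝ (v '' I)).topologicalClosure) w : H)⟫ := by
  set S := (span ℝ (v '' I)).topologicalClosure
  have hb : ⇑(HilbertBasis.mk hv htot) = v := HilbertBasis.coe_mk hv htot
  have hgap := (HilbertBasis.mk hv htot).sq_mul_norm_sub_starProjection_sq_le
    (T := (K : H →ₗ[ℝ] H)) hsa (by simpa [hb] using heig) hc.le hsep w
  rw [hb] at hgap
  have hpyth := norm_sq_eq_add_norm_sq_starProjection w S
  rw [starProjection_orthogonal_val] at hpyth
  have hres : ‖w - S.starProjection w‖ ^ 2 ≤ ε ^ 2 / c ^ 2 := by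
    rw [le_div_iff₀ (by positivity), mul_comm]
    exact hgap.trans (pow_le_pow_left₀ (norm_nonneg _) hKw 2)
  rw [← S.starProjection_apply, S.real_inner_starProjection_self]
  constructor <;> linarith [sq_nonneg ‖w - S.starProjection w‖]
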